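/- Let g be a geodesic in ℍ² ⊂ ℍ³ intersecting the vertical geodesic L = {(0,0,t): t>0} between j and e^{-m} j at angle ε > 0. Then for any δ > 0 there exists ε(δ) > 0 such that if ε < ε(δ), then for every rotation angle θ ∈ [0, 2π], D(R_g^θ({e^{-m} j, -j}), {e^{-m} j, -j}) < δ, uniformly in m. -/

import Mathlib

/-! The rotation about `g` is `z ↦ (A z + r² C) / (C z + Ā)` with `C` purely imaginary and
`|A|² + r² |C|² = 1`, where `r = √(-pq)` is the height at which `g` crosses `L`. The crossing
angle gives `sin ε · (q - p) = 2r`, and `|C| ≤ 2 / (q - p)` for every rotation angle, so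
`r |C| ≤ sin ε`. On `L` the rotation sends `(0, s)` to `(AC (r² - s²) / N, s / N)` with
`N = |A|² + |C|² s² ∈ [1 - sin² ε, 1]` for `s ≤ r`, and the downward vector to one at angle
`arccos ((|A|² - |C|² s²) / N) ≤ 2ε` from the vertical. Every term of `D` is therefore at most
`2ε`, whatever `m` and `θ` are. -/

open Real

/-- Euclidean inner product on tangent vectors to upper half-space `ℍ³ ≅ ℂ × ℝ`. -/
noncomputable def inn3 (a b : ℂ × ℝ) : ℝ := (a.1 * (starRingEnd ℂ) b.1).re + a.2 * b.2

/-- Euclidean norm of a tangent vector. -/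
noncomputable def nrm3 (a : ℂ × ℝ) : ℝ := Real.sqrt (‖a.1‖ ^ 2 + a.2 ^ 2)

/-- Euclidean angle between tangent vectors (after parallel transport). -/
noncomputable def angle3 (a b : ℂ × ℝ) : ℝ := Real.arccos (inn3 a b / (nrm3 a * nrm3 b))

/-- The quantity `D({P,u},{Q,v}) = max(|ht P/ht Q - 1|, |Z P - Z Q|, angle(u,v))`. -/
noncomputable def DD (P u Q v : ℂ × ℝ) : ℝ :=
  max (max |P.2 / Q.2 - 1| (‖P.1 - Q.1‖)) (angle3 u v)

/-- Denominator of the Poincaré extension. -/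
noncomputable def pdenom (c d : ℂ) (P : ℂ × ℝ) : ℝ :=
  ‖c * P.1 + d‖ ^ 2 + ‖c‖ ^ 2 * P.2 ^ 2

/-- The Poincaré extension of `w ↦ (aw+b)/(cw+d)` to upper half-space `ℍ³ ≅ ℂ × ℝ`. -/
noncomputable def poincare (a b c d : ℂ) (P : ℂ × ℝ) : ℂ × ℝ :=
  (((a * P.1 + b) * (starRingEnd ℂ) (c * P.1 + d) + a * (starRingEnd ℂ) c * (P.2 : ℂ) ^ 2) /
      (pdenom c d P : ℝ),
    P.2 / pdenom c d P)

/-- `e^{iε/2}`. -/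
noncomputable def ee (ε : ℝ) : ℂ := Complex.exp (Complex.I * ε / 2)

/-- Entries of the elliptic element of `PSL(2,ℂ)` fixing `p, q ∈ ℝ` with rotation angle `ε`:
the matrix `T diag(e^{iε/2}, e^{-iε/2}) T⁻¹` where `T = !![q, p; 1, 1]`. -/
noncomputable def rA (p q : ℝ) (ε : ℝ) : ℂ := ((q : ℂ) * ee ε - (p : ℂ) * ee (-ε)) / ((q : ℂ) - p)
noncomputable def rB (p q : ℝ) (ε : ℝ) : ℂ := ((p : ℂ) * q * (ee (-ε) - ee ε)) / ((q : ℂ) - p)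
noncomputable def rC (p q : ℝ) (ε : ℝ) : ℂ := (ee ε - ee (-ε)) / ((q : ℂ) - p)
noncomputable def rD (p q : ℝ) (ε : ℝ) : ℂ := ((q : ℂ) * ee (-ε) - (p : ℂ) * ee ε) / ((q : ℂ) - p)

open ComplexConjugate

lemma norm_ee (x : ℝ) : ‖ee x‖ = 1 := by
  rw [ee, show Complex.I * (x : ℂ) / 2 = ((x / 2 : ℝ) : ℂ) * Complex.I by push_cast; ring]
  exact Complex.norm_exp_ofReal_mul_I _

lemma conj_ee (x : ℝ) : conj (ee x) = ee (-x) := by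
  rw [ee, ee, ← Complex.exp_conj]
  congr 1
  simp only [map_div₀, map_mul, Complex.conj_I, Complex.conj_ofReal, Complex.conj_ofNat]
  push_cast
  ring

lemma ee_mul_ee_neg (x : ℝ) : ee x * ee (-x) = 1 := by
  rw [ee, ee, ← Complex.exp_add, ← Complex.exp_zero]
  push_cast
  ring_nf

section RotationEntries

variable (p q θ : ℝ)

lemma rD_eq_conj_rA : rD p q θ = conj (rA p q θ) := by
  simp only [rA, rD, map_div₀, map_sub, map_mul, Complex.conj_ofReal, conj_ee, neg_neg]

lemma conj_rC : conj (rC p q θ) = -rC p q θ := by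
  simp only [rC, map_div₀, map_sub, Complex.conj_ofReal, conj_ee, neg_neg]
  ring

lemma rB_eq_mul_rC : rB p q θ = ((-(p * q) : ℝ) : ℂ) * rC p q θ := by
  simp only [rB, rC]
  push_cast
  ring

lemma rA_mul_rD_sub_rB_mul_rC (hpq : p ≠ q) :
    rA p q θ * rD p q θ - rB p q θ * rC p q θ = 1 := by
  have : (q : ℂ) - p ≠ 0 := sub_ne_zero.2 (by exact_mod_cast hpq.symm)
  simp only [rA, rB, rC, rD]
  field_simp
  linear_combination ((q : ℂ) - p) ^ 2 * ee_mul_ee_neg θ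

lemma norm_rC_mul_le (hpq : p < q) : ‖rC p q θ‖ * (q - p) ≤ 2 := by
  have hqp : ‖(q : ℂ) - p‖ = q - p := by
    rw [← Complex.ofReal_sub, Complex.norm_real, Real.norm_of_nonneg (sub_nonneg.2 hpq.le)]
  rw [rC, norm_div, hqp, div_mul_cancel₀ _ (sub_pos.2 hpq).ne']
  calc ‖ee θ - ee (-θ)‖ ≤ ‖ee θ‖ + ‖ee (-θ)‖ := norm_sub_le _ _
    _ = 2 := by rw [norm_ee, norm_ee]; norm_num

end RotationEntries

lemma norm_sq_add_mul_norm_sq_eq_one {A C : ℂ} {ρ : ℝ} (hC : conj C = -C)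
    (hdet : A * conj A - (ρ : ℂ) * C * C = 1) : ‖A‖ ^ 2 + ρ * ‖C‖ ^ 2 = 1 := by
  have hCC : C * C = -(‖C‖ : ℂ) ^ 2 := by
    rw [← Complex.mul_conj', hC, mul_neg, neg_neg]
  rw [Complex.mul_conj'] at hdet
  exact_mod_cast (by linear_combination hdet + (ρ : ℂ) * hCC :
    (‖A‖ : ℂ) ^ 2 + (ρ : ℂ) * (‖C‖ : ℂ) ^ 2 = 1)

lemma sin_mul_sub_eq_two_mul_sqrt {p q ε : ℝ} (hp : p < 0) (hq : 0 < q) (hsin : 0 ≤ sin ε)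
    (hcos : cos ε = |p + q| / (q - p)) : sin ε * (q - p) = 2 * √(-(p * q)) := by
  have hqp : q - p ≠ 0 := by linarith
  have hsq : (sin ε * (q - p)) ^ 2 = (2 * √(-(p * q))) ^ 2 := by
    rw [mul_pow, mul_pow, sq_sqrt (by nlinarith), sin_sq, hcos, div_pow, sq_abs]
    field_simp
    ring
  exact (pow_left_inj₀ (mul_nonneg hsin (by linarith)) (by positivity) two_ne_zero).1 hsq

lemma pdenom_vertical (c d : ℂ) (s : ℝ) : pdenom c d (0, s) = ‖d‖ ^ 2 + ‖c‖ ^ 2 * s ^ 2 := by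
  simp [pdenom]

lemma differentiableAt_poincare (a b c d : ℂ) {P : ℂ × ℝ} (hP : pdenom c d P ≠ 0) :
    DifferentiableAt ℝ (poincare a b c d) P := by
  have hden : DifferentiableAt ℝ (pdenom c d) P :=
    ((by fun_prop : DifferentiableAt ℝ (fun P : ℂ × ℝ => c * P.1 + d) P).norm_sq ℝ).add
      (by fun_prop)
  have hsmul : poincare a b c d = fun P => ((pdenom c d P)⁻¹ •
      ((a * P.1 + b) * conj (c * P.1 + d) + a * conj c * (P.2 : ℂ) ^ 2), P.2 * (pdenom c d P)⁻¹) := by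
    funext P
    rw [poincare, Complex.real_smul, Complex.ofReal_inv, div_eq_inv_mul, div_eq_mul_inv]
  rw [hsmul]
  exact ((hden.inv hP).smul (by fun_prop)).prodMk (differentiableAt_snd.mul (hden.inv hP))

lemma fderiv_apply_down {f : ℂ × ℝ → ℂ × ℝ} {t : ℝ} {f' : ℂ × ℝ}
    (hf : DifferentiableAt ℝ f (0, t)) (hvert : HasDerivAt (fun s => f (0, s)) f' t) :
    fderiv ℝ f (0, t) (0, -1) = -f' := by
  have hline : HasDerivAt (fun s : ℝ => ((0 : ℂ), s)) ((0 : ℂ), (1 : ℝ)) t :=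
    (hasDerivAt_const t (0 : ℂ)).prodMk (hasDerivAt_id t)
  rw [← (hf.hasFDerivAt.comp_hasDerivAt t hline).unique hvert, ← map_neg, Prod.neg_mk, neg_zero]

lemma angle3_down (z : ℂ) (h : ℝ) : angle3 (z, h) (0, -1) = arccos (-h / √(‖z‖ ^ 2 + h ^ 2)) := by
  simp [angle3, inn3, nrm3]

section SymmetricRotation

variable {A C : ℂ} {r : ℝ}

lemma poincare_symm_vertical (hC : conj C = -C) (s : ℝ) :
    poincare A ((r ^ 2 : ℝ) * C) C (conj A) (0, s) =
      ((((r ^ 2 - s ^ 2) / (‖A‖ ^ 2 + ‖C‖ ^ 2 * s ^ 2) : ℝ) : ℂ) * (A * C),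
        s / (‖A‖ ^ 2 + ‖C‖ ^ 2 * s ^ 2)) := by
  rw [poincare, pdenom_vertical, Complex.norm_conj]
  simp only [mul_zero, zero_add, Complex.conj_conj, hC]
  push_cast
  ring_nf

lemma hasDerivAt_sub_sq_div (X Y ρ : ℝ) {t : ℝ} (h : X + ρ * Y = 1) (ht : X + Y * t ^ 2 ≠ 0) :
    HasDerivAt (fun s => (ρ - s ^ 2) / (X + Y * s ^ 2)) (-2 * t / (X + Y * t ^ 2) ^ 2) t := by
  have hnum := (hasDerivAt_pow 2 t).const_sub ρ
  have hden := ((hasDerivAt_pow 2 t).const_mul Y).const_add X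
  refine (hnum.div hden ht).congr_deriv ?_
  congr 1
  norm_num
  linear_combination (-2 * t) * h

lemma hasDerivAt_poincare_symm_vertical (hC : conj C = -C) (hAC : ‖A‖ ^ 2 + r ^ 2 * ‖C‖ ^ 2 = 1)
    {t : ℝ} (ht : ‖A‖ ^ 2 + ‖C‖ ^ 2 * t ^ 2 ≠ 0) :
    HasDerivAt (fun s => poincare A ((r ^ 2 : ℝ) * C) C (conj A) (0, s))
      ((((-2 * t) / (‖A‖ ^ 2 + ‖C‖ ^ 2 * t ^ 2) ^ 2 : ℝ) : ℂ) * (A * C),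
        (‖A‖ ^ 2 - ‖C‖ ^ 2 * t ^ 2) / (‖A‖ ^ 2 + ‖C‖ ^ 2 * t ^ 2) ^ 2) t := by
  simp only [poincare_symm_vertical hC]
  refine (((hasDerivAt_sub_sq_div _ _ _ hAC ht).ofReal_comp).mul_const _).prodMk ?_
  refine ((hasDerivAt_id' t).div (((hasDerivAt_pow 2 t).const_mul _).const_add _) ht).congr_deriv ?_
  congr 1
  norm_num
  ring

lemma angle3_neg_vertical_deriv {t : ℝ} (hN : 0 < ‖A‖ ^ 2 + ‖C‖ ^ 2 * t ^ 2) :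
    angle3 (-((((-2 * t) / (‖A‖ ^ 2 + ‖C‖ ^ 2 * t ^ 2) ^ 2 : ℝ) : ℂ) * (A * C),
        (‖A‖ ^ 2 - ‖C‖ ^ 2 * t ^ 2) / (‖A‖ ^ 2 + ‖C‖ ^ 2 * t ^ 2) ^ 2)) (0, -1) =
      arccos ((‖A‖ ^ 2 - ‖C‖ ^ 2 * t ^ 2) / (‖A‖ ^ 2 + ‖C‖ ^ 2 * t ^ 2)) := by
  set N := ‖A‖ ^ 2 + ‖C‖ ^ 2 * t ^ 2
  have hnorm : √(‖-(((-2 * t / N ^ 2 : ℝ) : ℂ) * (A * C))‖ ^ 2 +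
      (-((‖A‖ ^ 2 - ‖C‖ ^ 2 * t ^ 2) / N ^ 2)) ^ 2) = 1 / N := by
    rw [← sqrt_sq (one_div_pos.2 hN).le]
    congr 1
    rw [norm_neg, norm_mul, norm_mul, Complex.norm_real, Real.norm_eq_abs, mul_pow, mul_pow, sq_abs]
    field_simp
    ring
  rw [Prod.neg_mk, angle3_down, hnorm]
  field_simp

theorem DD_poincare_symm_vertical_le {t ε : ℝ} (hC : conj C = -C)
    (hAC : ‖A‖ ^ 2 + r ^ 2 * ‖C‖ ^ 2 = 1) (ht : 0 < t) (htr : t ≤ r) (hr : r ≤ 1)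
    (hε : 0 < ε) (hε' : ε ≤ 1 / 2) (hCr : ‖C‖ * r ≤ sin ε) :
    DD (poincare A ((r ^ 2 : ℝ) * C) C (conj A) (0, t))
      (fderiv ℝ (poincare A ((r ^ 2 : ℝ) * C) C (conj A)) (0, t) (0, -1)) (0, t) (0, -1)
      ≤ 2 * ε := by
  have hs : sin ε ≤ ε := sin_le hε.le
  have hs0 : 0 < sin ε := sin_pos_of_pos_of_lt_pi hε (by linarith [pi_gt_three])
  have hA : ‖A‖ ≤ 1 := by nlinarith [norm_nonneg A, sq_nonneg (r * ‖C‖)]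
  have hCr2 : ‖C‖ * (r ^ 2 - t ^ 2) ≤ sin ε := by nlinarith [norm_nonneg C, sq_nonneg t]
  have hYr : ‖C‖ ^ 2 * r ^ 2 ≤ sin ε ^ 2 := by
    rw [← mul_pow]; exact pow_le_pow_left₀ (mul_nonneg (norm_nonneg _) (ht.le.trans htr)) hCr 2
  have hYt : ‖C‖ ^ 2 * t ^ 2 ≤ ‖C‖ ^ 2 * r ^ 2 :=
    mul_le_mul_of_nonneg_left (pow_le_pow_left₀ ht.le htr 2) (sq_nonneg _)
  have hN1 : ‖A‖ ^ 2 + ‖C‖ ^ 2 * t ^ 2 ≤ 1 := by linarith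
  have hNs : 1 - sin ε ^ 2 ≤ ‖A‖ ^ 2 + ‖C‖ ^ 2 * t ^ 2 := by nlinarith [sq_nonneg (‖C‖ * t)]
  have hN2 : 1 / 2 ≤ ‖A‖ ^ 2 + ‖C‖ ^ 2 * t ^ 2 := by nlinarith
  have hN0 : 0 < ‖A‖ ^ 2 + ‖C‖ ^ 2 * t ^ 2 := by linarith
  have hcos : cos (2 * ε) = 1 - 2 * sin ε ^ 2 := by
    rw [cos_two_mul, cos_sq']
    ring
  rw [fderiv_apply_down
      (differentiableAt_poincare _ _ _ _ (by rw [pdenom_vertical, Complex.norm_conj]; exact hN0.ne'))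
      (hasDerivAt_poincare_symm_vertical hC hAC hN0.ne'),
    poincare_symm_vertical hC, DD, angle3_neg_vertical_deriv hN0]
  set N := ‖A‖ ^ 2 + ‖C‖ ^ 2 * t ^ 2
  refine max_le (max_le ?height ?horizontal) ?angle
  case height =>
    rw [show t / N / t - 1 = (1 - N) / N by field_simp, abs_of_nonneg (by bound),
      div_le_iff₀ hN0]
    nlinarith
  case horizontal =>
    rw [sub_zero, norm_mul, Complex.norm_real, norm_mul,
      Real.norm_of_nonneg (div_nonneg (by nlinarith) hN0.le), div_mul_eq_mul_div, div_le_iff₀ hN0]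
    nlinarith [norm_nonneg A, norm_nonneg C]
  case angle =>
    calc arccos ((‖A‖ ^ 2 - ‖C‖ ^ 2 * t ^ 2) / N) ≤ arccos (cos (2 * ε)) := by
          refine arccos_le_arccos ((le_div_iff₀ hN0).2 ?_)
          nlinarith
      _ = 2 * ε := arccos_cos (by linarith) (by linarith [pi_gt_three])

end SymmetricRotation

/-- Lemma A.5: if the geodesic `g` (endpoints `p < 0 < q`) crosses the vertical geodesic
`L` between `j` and `e^{-m} j` at angle `ε` (so `cos ε = |p+q|/(q-p)`), then for any
`δ > 0` there is `ε(δ) > 0` such that if `ε < ε(δ)`, the rotation `R_g^θ` by any angle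
`θ ∈ [0, 2π]` moves the downward unit vector at `e^{-m} j` by less than `δ` in the
quantity `D`, uniformly in `m`. -/
theorem stmt15 : ∀ δ > (0:ℝ), ∃ ε₁ > (0:ℝ), ∀ m : ℝ, 0 < m → ∀ p q ε θ : ℝ,
    p < 0 → 0 < q →
    Real.exp (-m) ≤ Real.sqrt (-(p * q)) → Real.sqrt (-(p * q)) ≤ 1 →
    0 < ε → ε < ε₁ → Real.cos ε = |p + q| / (q - p) →
    0 ≤ θ → θ ≤ 2 * π →
    DD (poincare (rA p q θ) (rB p q θ) (rC p q θ) (rD p q θ) ((0 : ℂ), Real.exp (-m)))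
       (fderiv ℝ (poincare (rA p q θ) (rB p q θ) (rC p q θ) (rD p q θ))
         ((0 : ℂ), Real.exp (-m)) ((0 : ℂ), -1))
       ((0 : ℂ), Real.exp (-m)) ((0 : ℂ), -1) < δ := by
  intro δ hδ
  refine ⟨min (1 / 2) (δ / 2), by positivity, ?_⟩
  intro m _ p q ε θ hp hq htr hr hε hεδ hcos _ _
  have hε' : ε ≤ 1 / 2 := hεδ.le.trans (min_le_left _ _)
  have hpq : p < q := hp.trans hq
  set r := √(-(p * q))
  have hr2 : r ^ 2 = -(p * q) := sq_sqrt (by nlinarith)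
  have hsin0 : 0 ≤ sin ε := sin_nonneg_of_nonneg_of_le_pi hε.le (by linarith [pi_gt_three])
  have hsin : sin ε * (q - p) = 2 * r := sin_mul_sub_eq_two_mul_sqrt hp hq hsin0 hcos
  have hCr : ‖rC p q θ‖ * r ≤ sin ε :=
    calc ‖rC p q θ‖ * r = ‖rC p q θ‖ * (q - p) * sin ε / 2 := by
          rw [mul_assoc, mul_comm (q - p), hsin]; ring
      _ ≤ 2 * sin ε / 2 := by gcongr; exact norm_rC_mul_le p q θ hpq
      _ = sin ε := by ring
  have hAC : ‖rA p q θ‖ ^ 2 + r ^ 2 * ‖rC p q θ‖ ^ 2 = 1 := by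
    refine norm_sq_add_mul_norm_sq_eq_one (conj_rC p q θ) ?_
    rw [← rD_eq_conj_rA, hr2, ← rB_eq_mul_rC]
    exact rA_mul_rD_sub_rB_mul_rC p q θ hpq.ne
  rw [rB_eq_mul_rC, rD_eq_conj_rA, ← hr2]
  calc _ ≤ 2 * ε := DD_poincare_symm_vertical_le (conj_rC p q θ) hAC (exp_pos _) htr hr hε hε' hCr
    _ < δ := by linarith [min_le_right (1 / 2 : ℝ) (δ / 2)]
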